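/- arXiv:1909.12067 — 2 statements merged into one kernel-verified Lean document; each statement's English description precedes it below -/
import Mathlib

section
/- Let g : [0,∞) → [0,∞) be differentiable and satisfy g'(t) ≤ C·g(t)·log(K/g(t)) for positive constants C, K, with g(0) ≤ K/2. Then there exists a time t₀ > 0 depending only on C and K such that for all t ∈ [0, t₀], g(t) ≤ (1/K)^{e^{-Ct} - 1} · g(0)^{e^{-Ct}}. -/
/-! The Gompertz curve `K (b / K) ^ exp (-c t)` solves `φ' = c φ log (K / φ)`. For `c > C` and
`g 0 < b < K` it is a strict supersolution of the inequality satisfied by `g`, so `g` cannot cross it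
(fencing theorem). Letting `c ↓ C` and `b ↓ g 0` gives the bound, by continuity of `b ↦ b ^ e` at
`0` for `e > 0`. -/

open Finset
open scoped Classical

/-- Expectation with respect to the uniform measure on `{-1,1}^n` (points encoded as
`Fin n → Bool`). -/
noncomputable def cubeE (n : ℕ) (g : (Fin n → Bool) → ℝ) : ℝ :=
  (∑ x : Fin n → Bool, g x) / 2 ^ n

/-- Flip the `i`-th bit. -/
def flipBitAt {n : ℕ} (y : Fin n → Bool) (i : Fin n) : Fin n → Bool :=
  Function.update y i (!(y i))

/-- Influence of the `i`-th coordinate: `μ({y : f y ≠ f (y^{⊕i})})`. -/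
noncomputable def influence (n : ℕ) (f : (Fin n → Bool) → ℝ) (i : Fin n) : ℝ :=
  cubeE n (fun y => if f y ≠ f (flipBitAt y i) then 1 else 0)

/-- Variance with respect to the uniform measure. -/
noncomputable def cubeVar (n : ℕ) (f : (Fin n → Bool) → ℝ) : ℝ :=
  cubeE n (fun y => (f y - cubeE n f) ^ 2)

/-- `f` is Boolean (takes values in `{-1,1}`). -/
def IsBooleanPM (n : ℕ) (f : (Fin n → Bool) → ℝ) : Prop :=
  ∀ y, f y = 1 ∨ f y = -1

/-- `true ↦ 1`, `false ↦ -1`. -/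
noncomputable def toR (b : Bool) : ℝ := if b then 1 else -1

/-- Discrete derivative `∂_i f (y) = (f(y^{i→1}) - f(y^{i→-1}))/2`. -/
noncomputable def dderiv (n : ℕ) (f : (Fin n → Bool) → ℝ) (i : Fin n)
    (y : Fin n → Bool) : ℝ :=
  (f (Function.update y i true) - f (Function.update y i false)) / 2

/-- Sensitivity `h_f(y) = #{i : f y ≠ f (y^{⊕i})}`. -/
noncomputable def sens (n : ℕ) (f : (Fin n → Bool) → ℝ) (y : Fin n → Bool) : ℕ :=
  (Finset.univ.filter (fun i : Fin n => f y ≠ f (flipBitAt y i))).card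

/-- Fourier coefficient `f̂(S) = E[f(y) ∏_{i∈S} y_i]`. -/
noncomputable def cubeFourier (n : ℕ) (f : (Fin n → Bool) → ℝ) (S : Finset (Fin n)) : ℝ :=
  cubeE n (fun y => f y * ∏ i ∈ S, toR (y i))

/-- `f` is monotone (with `false ↦ -1 ≤ 1 ↤ true`). -/
def MonoBF (n : ℕ) (f : (Fin n → Bool) → ℝ) : Prop :=
  ∀ x y : Fin n → Bool, (∀ i, x i ≤ y i) → f x ≤ f y

open Real Filter Topology Set

/-- The solution of the Gompertz equation `φ' = c φ log (K / φ)` with `φ 0 = b`. -/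
noncomputable def gompertz (K c b t : ℝ) : ℝ :=
  (1 / K) ^ (exp (-c * t) - 1) * b ^ exp (-c * t)

section Gompertz

variable {K c b : ℝ}

theorem gompertz_zero : gompertz K c b 0 = b := by
  simp [gompertz]

theorem gompertz_eq_exp (hK : 0 < K) (hb : 0 < b) (t : ℝ) :
    gompertz K c b t = exp (log K + exp (-c * t) * (log b - log K)) := by
  rw [gompertz, rpow_def_of_pos (by positivity), rpow_def_of_pos hb, ← exp_add, one_div, log_inv]
  ring_nf

theorem gompertz_pos (hK : 0 < K) (hb : 0 < b) (t : ℝ) : 0 < gompertz K c b t := by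
  rw [gompertz_eq_exp hK hb]
  exact exp_pos _

theorem log_div_gompertz (hK : 0 < K) (hb : 0 < b) (t : ℝ) :
    log (K / gompertz K c b t) = exp (-c * t) * (log K - log b) := by
  rw [log_div hK.ne' (gompertz_pos hK hb t).ne', gompertz_eq_exp hK hb, log_exp]
  ring

theorem hasDerivAt_gompertz (hK : 0 < K) (hb : 0 < b) (t : ℝ) :
    HasDerivAt (gompertz K c b) (c * gompertz K c b t * log (K / gompertz K c b t)) t := by
  have h := ((((hasDerivAt_id' t).const_mul (-c)).exp.mul_const (log b - log K)).const_add
    (log K)).exp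
  rw [log_div_gompertz hK hb, funext (gompertz_eq_exp (c := c) hK hb)]
  convert h using 1
  ring

theorem continuous_gompertz_param (hK : K ≠ 0) (t : ℝ) :
    Continuous fun p : ℝ × ℝ => gompertz K p.1 p.2 t := by
  refine continuous_iff_continuousAt.2 fun p => ?_
  have he : Continuous fun p : ℝ × ℝ => exp (-p.1 * t) := by fun_prop
  exact ((continuousAt_const.rpow (he.sub continuous_const).continuousAt
    (Or.inl (one_div_ne_zero hK))).mul
    (continuous_snd.continuousAt.rpow he.continuousAt (Or.inr (exp_pos _))))

theorem le_gompertz_of_deriv_le {g : ℝ → ℝ} {C : ℝ} (hK : 0 < K) (hg : Differentiable ℝ g)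
    (hderiv : ∀ t, 0 ≤ t → deriv g t ≤ C * g t * log (K / g t)) (hCc : C < c)
    (hb : 0 < b) (hbK : b < K) (hg0 : g 0 ≤ b) {t : ℝ} (ht : 0 ≤ t) :
    g t ≤ gompertz K c b t := by
  refine image_le_of_deriv_right_lt_deriv_boundary hg.continuous.continuousOn
    (fun x _ => (hg x).hasDerivAt.hasDerivWithinAt) (by rwa [gompertz_zero])
    (hasDerivAt_gompertz hK hb) (fun x hx hgx => ?_) ⟨ht, le_rfl⟩
  have hlog : 0 < log (K / gompertz K c b x) := by
    rw [log_div_gompertz hK hb]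
    exact mul_pos (exp_pos _) (sub_pos.2 (log_lt_log hb hbK))
  calc deriv g x ≤ C * gompertz K c b x * log (K / gompertz K c b x) := hgx ▸ hderiv x hx.1
    _ < c * gompertz K c b x * log (K / gompertz K c b x) := by
      gcongr
      exact gompertz_pos hK hb x

end Gompertz

theorem differential_inequality_general (C K : ℝ) (hK : 0 < K) :
    ∃ t₀ > (0:ℝ), ∀ g : ℝ → ℝ,
      (∀ t, 0 ≤ t → 0 ≤ g t) → Differentiable ℝ g →
      (∀ t, 0 ≤ t → deriv g t ≤ C * g t * Real.log (K / g t)) →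
      g 0 ≤ K / 2 →
      ∀ t ∈ Set.Icc (0:ℝ) t₀,
        g t ≤ (1 / K) ^ (Real.exp (-C * t) - 1) * g 0 ^ Real.exp (-C * t) := by
  refine ⟨1, one_pos, fun g hg_nonneg hg hderiv hg0 t ht => ?_⟩
  have hlim : Tendsto (fun δ => gompertz K (C + δ) (g 0 + δ) t) (𝓝[>] 0)
      (𝓝 (gompertz K C (g 0) t)) := by
    have h : Continuous fun δ => gompertz K (C + δ) (g 0 + δ) t :=
      (continuous_gompertz_param hK.ne' t).comp (by fun_prop : Continuous fun δ => (C + δ, g 0 + δ))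
    simpa using (h.tendsto 0).mono_left nhdsWithin_le_nhds
  refine ge_of_tendsto hlim ?_
  filter_upwards [Ioo_mem_nhdsGT (half_pos hK)] with δ hδ
  have hg0_nonneg := hg_nonneg 0 le_rfl
  exact le_gompertz_of_deriv_le hK hg hderiv (by linarith [hδ.1]) (by linarith [hδ.1])
    (by linarith [hδ.2]) (by linarith [hδ.1]) ht.1

/-- Gronwall-type lemma for the differential inequality g' <= C g log(K/g). -/
theorem differential_inequality (C K : ℝ) (hC : 0 < C) (hK : 0 < K) :
    ∃ t₀ > (0:ℝ), ∀ g : ℝ → ℝ,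
      (∀ t, 0 ≤ t → 0 ≤ g t) → Differentiable ℝ g →
      (∀ t, 0 ≤ t → deriv g t ≤ C * g t * Real.log (K / g t)) →
      g 0 ≤ K / 2 →
      ∀ t ∈ Set.Icc (0:ℝ) t₀,
        g t ≤ (1 / K) ^ (Real.exp (-C * t) - 1) * g 0 ^ Real.exp (-C * t) :=
  differential_inequality_general C K hK
end

section
/- Let K ≥ 1 and let G : [0,K] → (0,∞) be a decreasing log-convex function. Set v = ∫_0^K e^{-2s} G(s) ds and assume v > G(K). Then for all 0 ≤ r < K, ∫_0^r e^{-2s} G(s) ds ≥ v·(1 - (G(K)/v)^{r/K}). -/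
open Finset
open scoped Classical

/-!
The weight `e^{-2s}` is log-linear, so `φ(s) = e^{-2s} G(s)` is again positive, decreasing and
log-convex. With `t = r / K`, the substitution `s = (1 - t) u + t K` maps `[0, K]` onto `[r, K]`,
and log-convexity gives `φ((1 - t) u + t K) ≤ φ(u)^(1-t) φ(K)^t`. Hölder's inequality against the
constant `φ(K)` then bounds the tail `∫_r^K φ` by `(1 - t) v^(1-t) (K φ(K))^t ≤ v^(1-t) G(K)^t`,
since `K e^{-2K} ≤ 1`, and `v^(1-t) G(K)^t = v (G(K)/v)^t`.
-/
open Real Set intervalIntegral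
open MeasureTheory (volume)

theorem le_rpow_mul_rpow_of_convexOn_log {E : Type*} [AddCommGroup E] [Module ℝ E] {s : Set E}
    {f : E → ℝ} (hf : ∀ x ∈ s, 0 < f x) (hlog : ConvexOn ℝ s fun x => log (f x)) {x y : E}
    (hx : x ∈ s) (hy : y ∈ s) {a b : ℝ} (ha : 0 ≤ a) (hb : 0 ≤ b) (hab : a + b = 1) :
    f (a • x + b • y) ≤ f x ^ a * f y ^ b :=
  calc f (a • x + b • y) = exp (log (f (a • x + b • y))) :=
        (exp_log (hf _ (hlog.1 hx hy ha hb hab))).symm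
    _ ≤ exp (a * log (f x) + b * log (f y)) := exp_le_exp.2 (hlog.2 hx hy ha hb hab)
    _ = f x ^ a * f y ^ b := by
      rw [exp_add, mul_comm a, mul_comm b, exp_mul, exp_mul, exp_log (hf x hx),
        exp_log (hf y hy)]

theorem convexOn_log_exp_mul {s : Set ℝ} (hs : Convex ℝ s) {G : ℝ → ℝ}
    (hG : ∀ x ∈ s, 0 < G x) (hlog : ConvexOn ℝ s fun x => log (G x)) (c : ℝ) :
    ConvexOn ℝ s fun x => log (exp (c * x) * G x) := by
  refine (((LinearMap.mul ℝ ℝ c).convexOn hs).add hlog).congr fun x hx => ?_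
  simp [log_mul (exp_pos _).ne' (hG x hx).ne']

theorem rpow_mul_rpow_le_mul_add {x y X Y p q : ℝ} (hx : 0 ≤ x) (hy : 0 ≤ y) (hX : 0 < X)
    (hY : 0 < Y) (hp : 0 ≤ p) (hq : 0 ≤ q) (hpq : p + q = 1) :
    x ^ p * y ^ q ≤ X ^ p * Y ^ q * (p * (x / X) + q * (y / Y)) := by
  have h := geom_mean_le_arith_mean2_weighted hp hq (div_nonneg hx hX.le) (div_nonneg hy hY.le) hpq
  rw [div_rpow hx hX.le, div_rpow hy hY.le] at h
  have hXY : 0 < X ^ p * Y ^ q := by positivity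
  calc x ^ p * y ^ q = X ^ p * Y ^ q * (x ^ p / X ^ p * (y ^ q / Y ^ q)) := by field_simp
    _ ≤ _ := mul_le_mul_of_nonneg_left h hXY.le

/-- Hölder's inequality when one factor is constant, proved pointwise by weighted AM-GM after
normalizing `f` by its integral and `c` by its integral `(b - a) * c`. -/
theorem integral_le_integral_rpow_mul_rpow {f g : ℝ → ℝ} {a b c p q : ℝ} (hab : a < b)
    (hc : 0 < c) (hp : 0 ≤ p) (hq : 0 ≤ q) (hpq : p + q = 1)
    (hf : IntervalIntegrable f volume a b) (hf0 : ∀ x ∈ Icc a b, 0 ≤ f x)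
    (hV : 0 < ∫ x in a..b, f x) (hg : IntervalIntegrable g volume a b)
    (hgf : ∀ x ∈ Icc a b, g x ≤ f x ^ p * c ^ q) :
    ∫ x in a..b, g x ≤ (∫ x in a..b, f x) ^ p * ((b - a) * c) ^ q := by
  set V := ∫ x in a..b, f x with hVdef
  have hL : 0 < (b - a) * c := mul_pos (sub_pos.2 hab) hc
  calc ∫ x in a..b, g x
      ≤ ∫ x in a..b, V ^ p * ((b - a) * c) ^ q * (p * (f x / V) + q * (c / ((b - a) * c))) :=
        integral_mono_on hab.le hg
          (((hf.div_const V).const_mul p |>.add intervalIntegrable_const).const_mul _)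
          fun x hx => (hgf x hx).trans (rpow_mul_rpow_le_mul_add (hf0 x hx) hc.le hV hL hp hq hpq)
    _ = V ^ p * ((b - a) * c) ^ q := by
        rw [integral_const_mul, integral_add ((hf.div_const V).const_mul p) intervalIntegrable_const,
          integral_const_mul, integral_div, integral_const, smul_eq_mul, ← hVdef]
        have hba : b - a ≠ 0 := (sub_pos.2 hab).ne'
        field_simp
        linear_combination hpq

theorem integral_tail_le_of_convexOn_log {φ : ℝ → ℝ} {a b t : ℝ} (hab : a < b) (ht0 : 0 ≤ t)
    (ht1 : t < 1) (hφ : ∀ x ∈ Icc a b, 0 < φ x) (hanti : AntitoneOn φ (Icc a b))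
    (hlog : ConvexOn ℝ (Icc a b) fun x => log (φ x)) :
    ∫ x in (1 - t) * a + t * b..b, φ x
      ≤ (1 - t) * ((∫ x in a..b, φ x) ^ (1 - t) * ((b - a) * φ b) ^ t) := by
  have hb : b ∈ Icc a b := right_mem_Icc.2 hab.le
  have hcomb : ∀ u ∈ Icc a b, (1 - t) * u + t * b ∈ Icc a b := fun u hu =>
    (convex_Icc a b) hu hb (by linarith) ht0 (by ring)
  have hφint : IntervalIntegrable φ volume a b :=
    (hanti.mono (uIcc_of_le hab.le).subset).intervalIntegrable
  have hcomp_int : IntervalIntegrable (fun u => φ ((1 - t) * u + t * b)) volume a b := by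
    refine AntitoneOn.intervalIntegrable fun x hx y hy hxy => ?_
    rw [uIcc_of_le hab.le] at hx hy
    exact hanti (hcomb x hx) (hcomb y hy) (by nlinarith)
  have hsubst : ∫ x in (1 - t) * a + t * b..b, φ x
      = (1 - t) * ∫ u in a..b, φ ((1 - t) * u + t * b) := by
    rw [← smul_eq_mul (1 - t) (∫ u in a..b, _), smul_integral_comp_mul_add,
      show (1 - t) * b + t * b = b by ring]
  rw [hsubst]
  refine mul_le_mul_of_nonneg_left ?_ (by linarith)
  refine integral_le_integral_rpow_mul_rpow hab (hφ b hb) (by linarith) ht0 (by ring) hφint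
    (fun x hx => (hφ x hx).le) (intervalIntegral_pos_of_pos_on hφint
      (fun x hx => hφ x (Ioo_subset_Icc_self hx)) hab) hcomp_int fun u hu => ?_
  simpa only [smul_eq_mul] using
    le_rpow_mul_rpow_of_convexOn_log hφ hlog hu hb (by linarith) ht0 (by ring)

theorem integral_head_ge_of_convexOn_log {φ : ℝ → ℝ} {a b t : ℝ} (hab : a < b) (ht0 : 0 ≤ t)
    (ht1 : t < 1) (hφ : ∀ x ∈ Icc a b, 0 < φ x) (hanti : AntitoneOn φ (Icc a b))
    (hlog : ConvexOn ℝ (Icc a b) fun x => log (φ x)) :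
    (∫ x in a..b, φ x) * (1 - ((b - a) * φ b / ∫ x in a..b, φ x) ^ t)
      ≤ ∫ x in a..(1 - t) * a + t * b, φ x := by
  have hb : b ∈ Icc a b := right_mem_Icc.2 hab.le
  have hm : (1 - t) * a + t * b ∈ Icc a b :=
    (convex_Icc a b) (left_mem_Icc.2 hab.le) hb (by linarith) ht0 (by ring)
  have hφint : ∀ x ∈ Icc a b, ∀ y ∈ Icc a b, IntervalIntegrable φ volume x y :=
    fun x hx y hy => (hanti.mono (uIcc_subset_Icc hx hy)).intervalIntegrable
  have hsplit := integral_add_adjacent_intervals (hφint a (left_mem_Icc.2 hab.le) _ hm)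
    (hφint _ hm b hb)
  have hV : 0 < ∫ x in a..b, φ x := intervalIntegral_pos_of_pos_on
    (hφint a (left_mem_Icc.2 hab.le) b hb) (fun x hx => hφ x (Ioo_subset_Icc_self hx)) hab
  have hL : 0 ≤ (b - a) * φ b := mul_nonneg (sub_nonneg.2 hab.le) (hφ b hb).le
  have htail := integral_tail_le_of_convexOn_log hab ht0 ht1 hφ hanti hlog
  set V := ∫ x in a..b, φ x
  have hpow : V * ((b - a) * φ b / V) ^ t = V ^ (1 - t) * ((b - a) * φ b) ^ t := by
    rw [div_rpow hL hV.le, rpow_sub hV, rpow_one]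
    field_simp
  have hdrop : (1 - t) * (V ^ (1 - t) * ((b - a) * φ b) ^ t) ≤ V ^ (1 - t) * ((b - a) * φ b) ^ t :=
    mul_le_of_le_one_left (by positivity) (by linarith)
  linarith

theorem mul_exp_neg_two_mul_le_one {K : ℝ} (hK : 0 ≤ K) : K * exp (-2 * K) ≤ 1 := by
  rw [neg_mul, exp_neg, ← div_eq_mul_inv, div_le_one (exp_pos _)]
  linarith [add_one_le_exp (2 * K)]

theorem log_convex_integral_bound_general (K : ℝ) (G : ℝ → ℝ)
    (hGpos : ∀ s ∈ Set.Icc (0:ℝ) K, 0 < G s)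
    (hGdec : AntitoneOn G (Set.Icc (0:ℝ) K))
    (hGlc : ConvexOn ℝ (Set.Icc (0:ℝ) K) (fun s => Real.log (G s)))
    (v : ℝ) (hv : v = ∫ s in (0:ℝ)..K, Real.exp (-2 * s) * G s) :
    ∀ r : ℝ, 0 ≤ r → r < K →
      v * (1 - (G K / v) ^ (r / K)) ≤ ∫ s in (0:ℝ)..r, Real.exp (-2 * s) * G s := by
  intro r hr hrK
  have hK : 0 < K := hr.trans_lt hrK
  have hK_mem : K ∈ Icc 0 K := right_mem_Icc.2 hK.le
  set φ := fun s => exp (-2 * s) * G s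
  have hφ : ∀ s ∈ Icc 0 K, 0 < φ s := fun s hs => mul_pos (exp_pos _) (hGpos s hs)
  have hanti : AntitoneOn φ (Icc 0 K) := fun x hx y hy hxy =>
    mul_le_mul (exp_le_exp.2 (by linarith)) (hGdec hx hy hxy) (hGpos y hy).le (exp_pos _).le
  have hhead := integral_head_ge_of_convexOn_log hK (div_nonneg hr hK.le) ((div_lt_one hK).2 hrK)
    hφ hanti (convexOn_log_exp_mul (convex_Icc 0 K) hGpos hGlc (-2))
  rw [mul_zero, zero_add, div_mul_cancel₀ r hK.ne', sub_zero, ← hv] at hhead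
  have hv0 : 0 ≤ v := hv ▸ integral_nonneg hK.le fun s hs => (hφ s hs).le
  have hKφ : K * φ K ≤ G K := by
    simpa only [φ, ← mul_assoc] using mul_le_of_le_one_left (hGpos K hK_mem).le
      (mul_exp_neg_two_mul_le_one hK.le)
  refine le_trans ?_ hhead
  gcongr
  exact div_nonneg (mul_nonneg hK.le (hφ K hK_mem).le) hv0

/-- Integral lower bound for decreasing log-convex functions. -/
theorem log_convex_integral_bound (K : ℝ) (hK : 1 ≤ K) (G : ℝ → ℝ)
    (hGpos : ∀ s ∈ Set.Icc (0:ℝ) K, 0 < G s)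
    (hGdec : AntitoneOn G (Set.Icc (0:ℝ) K))
    (hGlc : ConvexOn ℝ (Set.Icc (0:ℝ) K) (fun s => Real.log (G s)))
    (v : ℝ) (hv : v = ∫ s in (0:ℝ)..K, Real.exp (-2 * s) * G s)
    (hvG : G K < v) :
    ∀ r : ℝ, 0 ≤ r → r < K →
      v * (1 - (G K / v) ^ (r / K)) ≤ ∫ s in (0:ℝ)..r, Real.exp (-2 * s) * G s :=
  log_convex_integral_bound_general K G hGpos hGdec hGlc v hv
end
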